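/- Let ρ > 0 and let W₁,…,W_N : ℝ^N × ℝⁿ → ℝⁿ be C^∞ maps satisfying the integrability condition: for all j, k and all (t,y) with |t| < ρ, ∂_{t_k} W_j(t,y) − ∂_{t_j} W_k(t,y) = [W_j(t,·), W_k(t,·)](y). Define W(t,y) := ∑_{j=1}^N t_j W_j(t,y), X_{α,j} := ∂_t^α W_j(0,·), and X_α := ∂_t^α W(0,·)/α!. For a set S of maps ℝⁿ → ℝⁿ, let Lie(S) denote the smallest ℝ-linear subspace of maps ℝⁿ → ℝⁿ containing S and closed under the Lie bracket. Then for every M ∈ ℕ: Lie({X_{α,j} : |α| ≤ M, 1 ≤ j ≤ N}) = Lie({X_α : 1 ≤ |α| ≤ M+1}). Consequently, the family {X_{α,j} : α ∈ ℕ^N, 1 ≤ j ≤ N} satisfies Hörmander's condition at a point x₀ (i.e., the evaluations at x₀ of the elements of the Lie-generated subspace span ℝⁿ) if and only if the family {X_α : α ∈ ℕ^N, |α| ≥ 1} does. -/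

import Mathlib

/-- The Lie bracket `[V,U](y) = DU(y)·V(y) − DV(y)·U(y)` of vector fields on ℝⁿ. -/
noncomputable def lieBracket {n : ℕ}
    (V U : EuclideanSpace ℝ (Fin n) → EuclideanSpace ℝ (Fin n)) :
    EuclideanSpace ℝ (Fin n) → EuclideanSpace ℝ (Fin n) :=
  fun y => fderiv ℝ U y (V y) - fderiv ℝ V y (U y)

/-- The partial derivative in the `j`-th coordinate direction. -/
noncomputable def pd {N : ℕ} {F : Type*} [NormedAddCommGroup F] [NormedSpace ℝ F]
    (j : Fin N) (f : EuclideanSpace ℝ (Fin N) → F) : EuclideanSpace ℝ (Fin N) → F :=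
  fun t => fderiv ℝ f t (EuclideanSpace.single j 1)

/-- The iterated partial derivative `∂^α` attached to a multi-index `α ∈ ℕ^N`. -/
noncomputable def pdAlpha {N : ℕ} {F : Type*} [NormedAddCommGroup F] [NormedSpace ℝ F]
    (α : Fin N → ℕ) (f : EuclideanSpace ℝ (Fin N) → F) : EuclideanSpace ℝ (Fin N) → F :=
  (List.finRange N).foldr (fun j g => (pd j)^[α j] g) f

/-- The factorial `α!` of a multi-index. -/
def mfact {N : ℕ} (α : Fin N → ℕ) : ℕ := ∏ i, (α i).factorial

/-- `LieGen S` is (the membership predicate of) the smallest ℝ-linear subspace of maps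
ℝⁿ → ℝⁿ containing `S` and closed under the Lie bracket. -/
inductive LieGen {n : ℕ} (S : Set (EuclideanSpace ℝ (Fin n) → EuclideanSpace ℝ (Fin n))) :
    (EuclideanSpace ℝ (Fin n) → EuclideanSpace ℝ (Fin n)) → Prop
  | of {f} : f ∈ S → LieGen S f
  | zero : LieGen S 0
  | add {f g} : LieGen S f → LieGen S g → LieGen S (f + g)
  | smul (c : ℝ) {f} : LieGen S f → LieGen S (c • f)
  | bracket {f g} : LieGen S f → LieGen S g → LieGen S (lieBracket f g)


noncomputable section
open scoped Topology

variable {E F : Type*} [NormedAddCommGroup E] [NormedSpace ℝ E]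
  [NormedAddCommGroup F] [NormedSpace ℝ F]

/-- Directional derivative operator. -/
noncomputable def dirD (v : E) (G : E → F) : E → F := fun p => fderiv ℝ G p v

lemma ContDiff.dirD {G : E → F} (hG : ContDiff ℝ (⊤ : ℕ∞) G) (v : E) :
    ContDiff ℝ (⊤ : ℕ∞) (dirD v G) :=
  (hG.fderiv_right (by simp)).clm_apply contDiff_const

lemma dirD_fderiv {G : E → F} (hG : ContDiff ℝ (⊤ : ℕ∞) G) (v w : E) (p : E) :
    dirD v (dirD w G) p = fderiv ℝ (fderiv ℝ G) p v w := by
  have h2 : DifferentiableAt ℝ (fderiv ℝ G) p :=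
    ((hG.fderiv_right (m := 1) (WithTop.coe_le_coe.mpr le_top)).differentiable one_ne_zero) p
  have h3 : fderiv ℝ (dirD w G) p
      = (fderiv ℝ G p).comp 0 + (fderiv ℝ (fderiv ℝ G) p).flip w :=
    (h2.hasFDerivAt.clm_apply (hasFDerivAt_const w p)).fderiv
  simp only [dirD]
  rw [h3]
  simp

lemma dirD_comm {G : E → F} (hG : ContDiff ℝ (⊤ : ℕ∞) G) (v w : E) :
    dirD v (dirD w G) = dirD w (dirD v G) := by
  funext p
  rw [dirD_fderiv hG, dirD_fderiv hG]
  exact second_derivative_symmetric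
    (fun y => ((hG.differentiable (by simp)) y).hasFDerivAt)
    (((hG.fderiv_right (m := 1) (WithTop.coe_le_coe.mpr le_top)).differentiable one_ne_zero) p).hasFDerivAt v w

lemma dirD_add {G H : E → F} (hG : ContDiff ℝ (⊤ : ℕ∞) G) (hH : ContDiff ℝ (⊤ : ℕ∞) H) (v : E) :
    dirD v (G + H) = dirD v G + dirD v H := by
  funext p
  simp only [dirD, Pi.add_apply]
  rw [fderiv_add ((hG.differentiable (by simp)) p) ((hH.differentiable (by simp)) p)]
  simp

lemma dirD_const_smul {G : E → F} (hG : ContDiff ℝ (⊤ : ℕ∞) G) (c : ℝ) (v : E) :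
    dirD v (c • G) = c • dirD v G := by
  funext p
  simp only [dirD, Pi.smul_apply]
  rw [fderiv_const_smul ((hG.differentiable (by simp)) p) c]
  simp

lemma dirD_congr_on {G H : E → F} {U : Set E} (hU : IsOpen U) (h : Set.EqOn G H U) (v : E) :
    Set.EqOn (dirD v G) (dirD v H) U := by
  intro p hp
  simp only [dirD]
  rw [Filter.EventuallyEq.fderiv_eq (Filter.eventuallyEq_of_mem (hU.mem_nhds hp) h)]

/-- Iterated directional derivatives along a list of directions. -/
noncomputable def dirL (L : List E) (G : E → F) : E → F := L.foldr dirD G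

@[simp] lemma dirL_nil (G : E → F) : dirL ([] : List E) G = G := rfl

@[simp] lemma dirL_cons (v : E) (L : List E) (G : E → F) :
    dirL (v :: L) G = dirD v (dirL L G) := rfl

lemma dirL_append (L₁ L₂ : List E) (G : E → F) :
    dirL (L₁ ++ L₂) G = dirL L₁ (dirL L₂ G) := List.foldr_append ..

lemma ContDiff.dirL {G : E → F} (hG : ContDiff ℝ (⊤ : ℕ∞) G) (L : List E) :
    ContDiff ℝ (⊤ : ℕ∞) (dirL L G) := by
  induction L with
  | nil => exact hG
  | cons v L ih => exact ih.dirD v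

lemma dirL_perm {G : E → F} (hG : ContDiff ℝ (⊤ : ℕ∞) G) {L L' : List E} (h : L.Perm L') :
    dirL L G = dirL L' G := by
  induction h with
  | nil => rfl
  | cons x _ ih => simp [dirL_cons, ih]
  | swap x y L => simp [dirL_cons, dirD_comm (hG.dirL L) x y]
  | trans _ _ ih₁ ih₂ => exact ih₁.trans ih₂

lemma dirL_add {G H : E → F} (hG : ContDiff ℝ (⊤ : ℕ∞) G) (hH : ContDiff ℝ (⊤ : ℕ∞) H) (L : List E) :
    dirL L (G + H) = dirL L G + dirL L H := by
  induction L with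
  | nil => rfl
  | cons v L ih => simp [dirL_cons, ih, dirD_add (hG.dirL L) (hH.dirL L)]

lemma dirL_congr_on {G H : E → F} {U : Set E} (hU : IsOpen U) (h : Set.EqOn G H U)
    (L : List E) : Set.EqOn (dirL L G) (dirL L H) U := by
  induction L with
  | nil => exact h
  | cons v L ih => exact dirD_congr_on hU ih v

lemma dirD_finsetSum {ι : Type*} {s : Finset ι} {f : ι → E → F}
    (hf : ∀ i ∈ s, ContDiff ℝ (⊤ : ℕ∞) (f i)) (v : E) :
    dirD v (∑ i ∈ s, f i) = ∑ i ∈ s, dirD v (f i) := by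
  classical
  induction s using Finset.induction_on with
  | empty =>
    funext p
    simp only [dirD, Finset.sum_empty, Pi.zero_apply]
    rw [show (0 : E → F) = fun _ => (0 : F) from rfl, fderiv_fun_const]
    simp
  | @insert a s' hx ih =>
    have h2 : ContDiff ℝ (⊤ : ℕ∞) (∑ i ∈ s', f i) := by
      rw [Finset.sum_fn]
      exact ContDiff.sum fun i hi => hf i (Finset.mem_insert_of_mem hi)
    rw [Finset.sum_insert hx, Finset.sum_insert hx,
      dirD_add (hf a (Finset.mem_insert_self a s')) h2,
      ih fun i hi => hf i (Finset.mem_insert_of_mem hi)]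

lemma dirL_finsetSum {ι : Type*} {s : Finset ι} {f : ι → E → F}
    (hf : ∀ i ∈ s, ContDiff ℝ (⊤ : ℕ∞) (f i)) (L : List E) :
    dirL L (∑ i ∈ s, f i) = ∑ i ∈ s, dirL L (f i) := by
  induction L with
  | nil => rfl
  | cons v L ih =>
    rw [dirL_cons, ih, dirD_finsetSum fun i hi => (hf i hi).dirL L]
    rfl

lemma ContDiff.listSum {L : List (E → F)} (hf : ∀ f ∈ L, ContDiff ℝ (⊤ : ℕ∞) f) :
    ContDiff ℝ (⊤ : ℕ∞) L.sum := by
  induction L with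
  | nil => exact contDiff_const (c := (0 : F))
  | cons g L ih =>
    rw [List.sum_cons]
    exact ContDiff.add (hf g (List.mem_cons_self ..))
      (ih fun f hf' => hf f (List.mem_cons_of_mem _ hf'))

lemma dirD_listSum {L : List (E → F)} (hf : ∀ f ∈ L, ContDiff ℝ (⊤ : ℕ∞) f) (v : E) :
    dirD v L.sum = (L.map (dirD v)).sum := by
  induction L with
  | nil =>
    funext p
    simp only [dirD, List.sum_nil, List.map_nil, Pi.zero_apply]
    rw [show (0 : E → F) = fun _ => (0 : F) from rfl, fderiv_fun_const]
    simp
  | cons g L ih =>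
    rw [List.sum_cons, List.map_cons, List.sum_cons,
      dirD_add (hf g (List.mem_cons_self ..))
        (ContDiff.listSum fun f hf' => hf f (List.mem_cons_of_mem _ hf')),
      ih fun f hf' => hf f (List.mem_cons_of_mem _ hf')]

section Brk

variable {H : Type*} [NormedAddCommGroup H] [NormedSpace ℝ H]

/-- Bracket of two `t`-parametrized vector fields, as a function on the product space. -/
noncomputable def brk (A B : E × H → H) : E × H → H :=
  fun p => fderiv ℝ B p (0, A p) - fderiv ℝ A p (0, B p)

lemma contDiff_half {A B : E × H → H} (hA : ContDiff ℝ (⊤ : ℕ∞) A) (hB : ContDiff ℝ (⊤ : ℕ∞) B) :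
    ContDiff ℝ (⊤ : ℕ∞) (fun p => fderiv ℝ B p ((0 : E), A p)) :=
  (hB.fderiv_right (by simp)).clm_apply (contDiff_const.prodMk hA)

lemma ContDiff.brk {A B : E × H → H} (hA : ContDiff ℝ (⊤ : ℕ∞) A) (hB : ContDiff ℝ (⊤ : ℕ∞) B) :
    ContDiff ℝ (⊤ : ℕ∞) (brk A B) :=
  (contDiff_half hA hB).sub (contDiff_half hB hA)

lemma dirD_half {A B : E × H → H} (hA : ContDiff ℝ (⊤ : ℕ∞) A) (hB : ContDiff ℝ (⊤ : ℕ∞) B)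
    (u : E × H) (p : E × H) :
    dirD u (fun p => fderiv ℝ B p ((0 : E), A p)) p
      = fderiv ℝ B p (0, dirD u A p) + fderiv ℝ (dirD u B) p (0, A p) := by
  have hBd : DifferentiableAt ℝ (fderiv ℝ B) p :=
    ((hB.fderiv_right (m := 1) (WithTop.coe_le_coe.mpr le_top)).differentiable one_ne_zero) p
  have hg : HasFDerivAt (fun q : E × H => ((0 : E), A q))
      ((0 : (E × H) →L[ℝ] E).prod (fderiv ℝ A p)) p :=
    (hasFDerivAt_const (0 : E) p).prodMk ((hA.differentiable (by simp)) p).hasFDerivAt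
  have h := (hBd.hasFDerivAt.clm_apply hg).fderiv
  have h1 : dirD u (fun p => fderiv ℝ B p ((0 : E), A p)) p
      = fderiv ℝ B p (0, fderiv ℝ A p u)
        + fderiv ℝ (fderiv ℝ B) p u ((0 : E), A p) := by
    show fderiv ℝ (fun q => fderiv ℝ B q ((0 : E), A q)) p u = _
    rw [h]
    simp
  rw [h1]
  congr 1
  have h2 : fderiv ℝ (dirD u B) p ((0 : E), A p)
      = fderiv ℝ (fderiv ℝ B) p ((0 : E), A p) u :=
    dirD_fderiv hB ((0 : E), A p) u p
  rw [h2]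
  exact second_derivative_symmetric
    (fun y => ((hB.differentiable (by simp)) y).hasFDerivAt) hBd.hasFDerivAt _ _

lemma dirD_brk {A B : E × H → H} (hA : ContDiff ℝ (⊤ : ℕ∞) A) (hB : ContDiff ℝ (⊤ : ℕ∞) B) (u : E × H) :
    dirD u (brk A B) = brk (dirD u A) B + brk A (dirD u B) := by
  funext p
  have hd : dirD u (brk A B) p
      = dirD u (fun p => fderiv ℝ B p ((0 : E), A p)) p
        - dirD u (fun p => fderiv ℝ A p ((0 : E), B p)) p := by
    show fderiv ℝ (brk A B) p u = _
    have : brk A B = (fun p => fderiv ℝ B p ((0 : E), A p))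
        - (fun p => fderiv ℝ A p ((0 : E), B p)) := rfl
    rw [this, fderiv_sub ((contDiff_half hA hB).differentiable (by simp) p)
      ((contDiff_half hB hA).differentiable (by simp) p)]
    simp [dirD]
  rw [hd, dirD_half hA hB u p, dirD_half hB hA u p]
  show _ = brk (dirD u A) B p + brk A (dirD u B) p
  simp only [brk]
  abel

end Brk

section Splits

variable {ι γ : Type*}

/-- All ways to split a list into two complementary "sublists" (as an ordered choice
at each position). -/
def splits : List ι → List (List ι × List ι)
  | [] => [([], [])]
  | a :: l => (splits l).flatMap fun q => [(a :: q.1, q.2), (q.1, a :: q.2)]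

lemma splits_length {l : List ι} {q : List ι × List ι} (hq : q ∈ splits l) :
    q.1.length + q.2.length = l.length := by
  induction l generalizing q with
  | nil => simp [splits] at hq; simp [hq]
  | cons a l ih =>
    simp only [splits, List.mem_flatMap] at hq
    obtain ⟨q', hq', hmem⟩ := hq
    have := ih hq'
    simp only [List.mem_cons, List.mem_singleton] at hmem
    rcases hmem with h | h | h
    · subst h; simp; omega
    · subst h; simp; omega
    · simp at h

lemma list_sum_map_add {M : Type*} [AddCommMonoid M] (l : List γ) (f g : γ → M) :
    (l.map fun x => f x + g x).sum = (l.map f).sum + (l.map g).sum := by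
  induction l with
  | nil => simp
  | cons a l ih => simp [ih]; abel

lemma sum_map_flatMap_pair {δ : Type*} {M : Type*} [AddCommMonoid M] (l : List γ)
    (f g : γ → δ) (h : δ → M) :
    ((l.flatMap fun x => [f x, g x]).map h).sum = (l.map fun x => h (f x) + h (g x)).sum := by
  induction l with
  | nil => simp
  | cons a l ih => simp [ih]; abel

variable {H : Type*} [NormedAddCommGroup H] [NormedSpace ℝ H]

lemma dirL_brk {A B : E × H → H} (hA : ContDiff ℝ (⊤ : ℕ∞) A) (hB : ContDiff ℝ (⊤ : ℕ∞) B)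
    (d : ι → E × H) (l : List ι) :
    dirL (l.map d) (brk A B)
      = ((splits l).map fun q => brk (dirL (q.1.map d) A) (dirL (q.2.map d) B)).sum := by
  induction l with
  | nil => simp [splits]
  | cons a l ih =>
    have hsm : ∀ q ∈ splits l, ContDiff ℝ (⊤ : ℕ∞) (brk (dirL (q.1.map d) A) (dirL (q.2.map d) B)) :=
      fun q _ => ContDiff.brk (hA.dirL _) (hB.dirL _)
    rw [List.map_cons, dirL_cons, ih,
      dirD_listSum (by
        intro f hf
        simp only [List.mem_map] at hf
        obtain ⟨q, hq, rfl⟩ := hf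
        exact hsm q hq) (d a),
      List.map_map]
    have hcong : ((splits l).map (dirD (d a) ∘ fun q =>
        brk (dirL (q.1.map d) A) (dirL (q.2.map d) B)))
        = (splits l).map fun q =>
            brk (dirL ((a :: q.1).map d) A) (dirL (q.2.map d) B)
            + brk (dirL (q.1.map d) A) (dirL ((a :: q.2).map d) B) := by
      apply List.map_congr_left
      intro q _
      show dirD (d a) (brk (dirL (q.1.map d) A) (dirL (q.2.map d) B)) = _
      rw [dirD_brk (hA.dirL _) (hB.dirL _) (d a)]
      simp [dirL_cons]
    rw [hcong, list_sum_map_add]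
    show _ = ((splits (a :: l)).map _).sum
    rw [show splits (a :: l) = (splits l).flatMap fun q => [(a :: q.1, q.2), (q.1, a :: q.2)]
        from rfl,
      sum_map_flatMap_pair, list_sum_map_add]

end Splits

section Euclid

variable {N : ℕ} {H : Type*} [NormedAddCommGroup H] [NormedSpace ℝ H]
variable {F' : Type*} [NormedAddCommGroup F'] [NormedSpace ℝ F']

/-- The list of a multi-index. -/
def mToList (α : Fin N → ℕ) : List (Fin N) :=
  (List.finRange N).flatMap fun j => List.replicate (α j) j

lemma count_mToList (α : Fin N → ℕ) (i : Fin N) : (mToList α).count i = α i := by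
  have key : ∀ L : List (Fin N),
      (L.flatMap fun j => List.replicate (α j) j).count i
        = ((L.map fun j => if j = i then α j else 0).sum) := by
    intro L
    induction L with
    | nil => simp
    | cons a L ih =>
      simp only [List.flatMap_cons, List.count_append, ih, List.map_cons, List.sum_cons]
      congr 1
      rw [List.count_replicate]
      simp [beq_iff_eq]
  rw [mToList, key, ← Fin.sum_univ_def]
  simp

lemma length_mToList (α : Fin N → ℕ) : (mToList α).length = ∑ i, α i := by
  have key : ∀ L : List (Fin N),
      (L.flatMap fun j => List.replicate (α j) j).length = (L.map α).sum := by
    intro L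
    induction L with
    | nil => simp
    | cons a L ih => simp [ih]
  rw [mToList, key, ← Fin.sum_univ_def]

lemma mToList_count_perm (l : List (Fin N)) : (mToList fun i => l.count i).Perm l := by
  rw [List.perm_iff_count]
  intro a
  rw [count_mToList]

lemma sum_count_eq_length (l : List (Fin N)) : ∑ i, l.count i = l.length := by
  rw [← length_mToList fun i => l.count i]
  exact (mToList_count_perm l).length_eq

/-- `pdAlpha` as an iterated directional derivative. -/
lemma pdAlpha_eq_dirL (α : Fin N → ℕ) (f : EuclideanSpace ℝ (Fin N) → F') :
    pdAlpha α f = dirL ((mToList α).map fun j =>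
      (EuclideanSpace.single j 1 : EuclideanSpace ℝ (Fin N))) f := by
  have rep : ∀ (m : ℕ) (v : EuclideanSpace ℝ (Fin N)) (g : EuclideanSpace ℝ (Fin N) → F'),
      dirL (List.replicate m v) g = (dirD v)^[m] g := by
    intro m v g
    induction m with
    | zero => rfl
    | succ m ih => rw [List.replicate_succ, dirL_cons, ih, Function.iterate_succ_apply']
  have key : ∀ L : List (Fin N),
      L.foldr (fun j g => (pd j)^[α j] g) f
        = dirL ((L.flatMap fun j => List.replicate (α j) j).map fun j =>
            (EuclideanSpace.single j 1 : EuclideanSpace ℝ (Fin N))) f := by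
    intro L
    induction L with
    | nil => rfl
    | cons a L ih =>
      rw [List.foldr_cons, List.flatMap_cons, List.map_append, dirL_append, ← ih,
        List.map_replicate, rep]
      rfl
  exact key (List.finRange N)

end Euclid

section Sections

variable {H : Type*} [NormedAddCommGroup H] [NormedSpace ℝ H]
variable {F' : Type*} [NormedAddCommGroup F'] [NormedSpace ℝ F']

lemma dirD_fst_section {G : E × H → F'} {t : E} {y : H} (hG : DifferentiableAt ℝ G (t, y))
    (v : E) : dirD v (fun s => G (s, y)) t = dirD (v, 0) G (t, y) := by
  have h : HasFDerivAt (fun s => G (s, y))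
      ((fderiv ℝ G (t, y)).comp (ContinuousLinearMap.inl ℝ E H)) t :=
    hG.hasFDerivAt.comp t (hasFDerivAt_prodMk_left t y)
  show fderiv ℝ (fun s => G (s, y)) t v = fderiv ℝ G (t, y) (v, 0)
  rw [h.fderiv]
  simp

lemma dirL_fst_section {G : E × H → F'} (hG : ContDiff ℝ (⊤ : ℕ∞) G) (lv : List E) (y : H) :
    ∀ t, dirL lv (fun s => G (s, y)) t = dirL (lv.map fun v => ((v, 0) : E × H)) G (t, y) := by
  induction lv with
  | nil => intro t; rfl
  | cons v lv ih =>
    intro t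
    have h1 : dirL lv (fun s => G (s, y)) = fun s => dirL (lv.map fun v => ((v, 0) : E × H)) G (s, y) :=
      funext fun s => ih s
    rw [dirL_cons, h1]
    exact dirD_fst_section (((hG.dirL _).differentiable (by simp)) (t, y)) v

lemma fderiv_snd_section {G : E × H → F'} {t : E} {y : H} (hG : DifferentiableAt ℝ G (t, y)) :
    fderiv ℝ (fun y' => G (t, y')) y = (fderiv ℝ G (t, y)).comp (ContinuousLinearMap.inr ℝ E H) :=
  (hG.hasFDerivAt.comp y (hasFDerivAt_prodMk_right t y)).fderiv

lemma brk_at {n : ℕ} {A B : E × EuclideanSpace ℝ (Fin n) → EuclideanSpace ℝ (Fin n)}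
    (hA : ContDiff ℝ (⊤ : ℕ∞) A) (hB : ContDiff ℝ (⊤ : ℕ∞) B) (t : E) (y : EuclideanSpace ℝ (Fin n)) :
    brk A B (t, y) = lieBracket (fun y' => A (t, y')) (fun y' => B (t, y')) y := by
  show fderiv ℝ B (t, y) (0, A (t, y)) - fderiv ℝ A (t, y) (0, B (t, y))
    = fderiv ℝ (fun y' => B (t, y')) y (A (t, y)) - fderiv ℝ (fun y' => A (t, y')) y (B (t, y))
  rw [fderiv_snd_section ((hA.differentiable (by simp)) (t, y)),
    fderiv_snd_section ((hB.differentiable (by simp)) (t, y))]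
  simp

end Sections

section CoordRules

variable {N : ℕ} {H : Type*} [NormedAddCommGroup H] [NormedSpace ℝ H]
variable {F' : Type*} [NormedAddCommGroup F'] [NormedSpace ℝ F']

/-- The canonical directions in the product space. -/
noncomputable def embN (H : Type*) [NormedAddCommGroup H] [NormedSpace ℝ H] {N : ℕ}
    (j : Fin N) : EuclideanSpace ℝ (Fin N) × H := (EuclideanSpace.single j 1, 0)

lemma contDiff_coord (j : Fin N) :
    ContDiff ℝ (⊤ : ℕ∞) (fun p : EuclideanSpace ℝ (Fin N) × H => p.1 j) :=
  ((EuclideanSpace.proj j).comp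
    (ContinuousLinearMap.fst ℝ (EuclideanSpace ℝ (Fin N)) H)).contDiff

lemma dirD_coord_smul {F : EuclideanSpace ℝ (Fin N) × H → F'} (hF : ContDiff ℝ (⊤ : ℕ∞) F)
    (j : Fin N) (u : EuclideanSpace ℝ (Fin N) × H) :
    dirD u (fun p => (p.1 j) • F p)
      = fun p => (u.1 j) • F p + (p.1 j) • dirD u F p := by
  funext p
  have hc : HasFDerivAt (fun p : EuclideanSpace ℝ (Fin N) × H => p.1 j)
      ((EuclideanSpace.proj j).comp
        (ContinuousLinearMap.fst ℝ (EuclideanSpace ℝ (Fin N)) H)) p :=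
    ((EuclideanSpace.proj j).comp
      (ContinuousLinearMap.fst ℝ (EuclideanSpace ℝ (Fin N)) H)).hasFDerivAt
  have hf := ((hF.differentiable (by simp)) p).hasFDerivAt
  have h : fderiv ℝ (fun p => (p.1 j) • F p) p = _ := (hc.smul hf).fderiv
  show fderiv ℝ (fun p => (p.1 j) • F p) p u = _
  rw [h]
  simp only [ContinuousLinearMap.add_apply, ContinuousLinearMap.coe_smul', Pi.smul_apply,
    ContinuousLinearMap.smulRight_apply, ContinuousLinearMap.coe_comp', Function.comp_apply,
    ContinuousLinearMap.coe_fst']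
  rw [add_comm]
  rfl

lemma contDiff_coord_smul {F : EuclideanSpace ℝ (Fin N) × H → F'} (hF : ContDiff ℝ (⊤ : ℕ∞) F)
    (j : Fin N) : ContDiff ℝ (⊤ : ℕ∞) (fun p => (p.1 j) • F p) :=
  (contDiff_coord j).smul hF

lemma dirL_emb_coord_smul {F : EuclideanSpace ℝ (Fin N) × H → F'} (hF : ContDiff ℝ (⊤ : ℕ∞) F)
    (l : List (Fin N)) (j : Fin N) :
    dirL (l.map (embN H)) (fun p => (p.1 j) • F p)
      = (fun p => (p.1 j) • dirL (l.map (embN H)) F p)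
        + (l.count j : ℝ) • dirL ((l.erase j).map (embN H)) F := by
  induction l with
  | nil =>
    funext p
    simp [dirL_nil]
  | cons a l ih =>
    have hG : ContDiff ℝ (⊤ : ℕ∞) (dirL (l.map (embN H)) F) := hF.dirL _
    have hX : ContDiff ℝ (⊤ : ℕ∞) (fun p => (p.1 j) • dirL (l.map (embN H)) F p) :=
      contDiff_coord_smul hG j
    have hY : ContDiff ℝ (⊤ : ℕ∞)
        ((l.count j : ℝ) • dirL ((l.erase j).map (embN H)) F) := by
      exact (hF.dirL _).const_smul _
    rw [List.map_cons, dirL_cons, ih, dirD_add hX hY, dirD_const_smul (hF.dirL _),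
      dirD_coord_smul hG j (embN H a)]
    have hemb : ((embN H a : EuclideanSpace ℝ (Fin N) × H).1 j : ℝ)
        = if j = a then 1 else 0 := by
      simp [embN, EuclideanSpace.single_apply]
    by_cases haj : a = j
    · subst haj
      rw [hemb, if_pos rfl]
      have herase : (a :: l).erase a = l := List.erase_cons_head a l
      rw [herase]
      have hdd : dirD (embN H a) (dirL ((l.erase a).map (embN H)) F)
          = dirL ((a :: l.erase a).map (embN H)) F := rfl
      have hG' : (l.count a : ℝ) • dirD (embN H a) (dirL ((l.erase a).map (embN H)) F)
          = (l.count a : ℝ) • dirL (l.map (embN H)) F := by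
        by_cases hmem : a ∈ l
        · rw [hdd, dirL_perm hF ((List.perm_cons_erase hmem).symm.map (embN H))]
        · rw [List.count_eq_zero_of_not_mem hmem]
          simp
      rw [hG']
      funext p
      have hcnt : ((a :: l).count a : ℝ) = (l.count a : ℝ) + 1 := by
        rw [List.count_cons_self]; push_cast; ring
      simp only [Pi.add_apply, Pi.smul_apply, hcnt, one_smul, add_smul]
      rw [show dirL (embN H a :: (l.map (embN H))) F
          = dirD (embN H a) (dirL (l.map (embN H)) F) from rfl]
      abel
    · rw [hemb, if_neg (fun h => haj h.symm)]
      have hcount : (a :: l).count j = l.count j :=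
        List.count_cons_of_ne haj
      have herase : (a :: l).erase j = a :: l.erase j :=
        List.erase_cons_tail (by simp [haj])
      rw [hcount, herase]
      funext p
      simp only [Pi.add_apply, Pi.smul_apply, zero_smul, zero_add]
      rfl

end CoordRules

section LieGenLemmas

variable {n : ℕ} {S T : Set (EuclideanSpace ℝ (Fin n) → EuclideanSpace ℝ (Fin n))}

lemma lieGen_trans (hST : ∀ g ∈ S, LieGen T g) {f} (hf : LieGen S f) : LieGen T f := by
  induction hf with
  | of h => exact hST _ h
  | zero => exact LieGen.zero
  | add _ _ ih₁ ih₂ => exact LieGen.add ih₁ ih₂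
  | smul c _ ih => exact LieGen.smul c ih
  | bracket _ _ ih₁ ih₂ => exact LieGen.bracket ih₁ ih₂

lemma lieGen_mono (h : S ⊆ T) {f} (hf : LieGen S f) : LieGen T f :=
  lieGen_trans (fun g hg => LieGen.of (h hg)) hf

lemma lieGen_sub {f g} (hf : LieGen S f) (hg : LieGen S g) : LieGen S (f - g) := by
  rw [sub_eq_add_neg, ← neg_one_smul ℝ g]
  exact hf.add (hg.smul (-1))

lemma lieGen_listSum {L : List (EuclideanSpace ℝ (Fin n) → EuclideanSpace ℝ (Fin n))}
    (h : ∀ f ∈ L, LieGen S f) : LieGen S L.sum := by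
  induction L with
  | nil => exact LieGen.zero
  | cons g L ih =>
    rw [List.sum_cons]
    exact (h g (List.mem_cons_self ..)).add (ih fun f hf => h f (List.mem_cons_of_mem _ hf))

lemma lieGen_finsetSum {ι : Type*} {s : Finset ι}
    {f : ι → EuclideanSpace ℝ (Fin n) → EuclideanSpace ℝ (Fin n)}
    (h : ∀ i ∈ s, LieGen S (f i)) : LieGen S (∑ i ∈ s, f i) := by
  classical
  induction s using Finset.induction_on with
  | empty => simpa using LieGen.zero
  | @insert a s' ha ih =>
    rw [Finset.sum_insert ha]
    exact (h a (Finset.mem_insert_self a s')).add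
      (ih fun i hi => h i (Finset.mem_insert_of_mem hi))

lemma lieGen_of_smul {c : ℝ} (hc : c ≠ 0) {f} (hf : LieGen S (c • f)) : LieGen S f := by
  have : f = c⁻¹ • (c • f) := by
    rw [smul_smul, inv_mul_cancel₀ hc, one_smul]
  rw [this]
  exact hf.smul c⁻¹

lemma lieBracket_zero_left (g : EuclideanSpace ℝ (Fin n) → EuclideanSpace ℝ (Fin n)) :
    lieBracket 0 g = 0 := by
  funext y
  show fderiv ℝ g y ((0 : EuclideanSpace ℝ (Fin n) → EuclideanSpace ℝ (Fin n)) y)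
      - fderiv ℝ (0 : EuclideanSpace ℝ (Fin n) → EuclideanSpace ℝ (Fin n)) y (g y) = 0
  rw [show (0 : EuclideanSpace ℝ (Fin n) → EuclideanSpace ℝ (Fin n))
      = fun _ => (0 : EuclideanSpace ℝ (Fin n)) from rfl, fderiv_fun_const]
  simp

end LieGenLemmas

lemma list_sum_pointwise {γ M : Type*} [AddCommMonoid M] (L : List (γ → M)) (x : γ) :
    L.sum x = (L.map fun f => f x).sum := by
  induction L with
  | nil => rfl
  | cons g L ih => simp [ih]

lemma contDiff_finsetSum {ι : Type*} {s : Finset ι} {f : ι → E → F}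
    (hf : ∀ i ∈ s, ContDiff ℝ (⊤ : ℕ∞) (f i)) : ContDiff ℝ (⊤ : ℕ∞) (∑ i ∈ s, f i) := by
  rw [Finset.sum_fn]
  exact ContDiff.sum hf

lemma mfact_ne_zero {N : ℕ} (α : Fin N → ℕ) : (mfact α : ℝ) ≠ 0 := by
  have : 0 < mfact α := Finset.prod_pos fun i _ => Nat.factorial_pos (α i)
  positivity

section Main

variable {N n : ℕ}
  (W : Fin N → EuclideanSpace ℝ (Fin N) → EuclideanSpace ℝ (Fin n) →
    EuclideanSpace ℝ (Fin n))

/-- `W j` as a function on the product space. -/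
def Wp (j : Fin N) : EuclideanSpace ℝ (Fin N) × EuclideanSpace ℝ (Fin n) →
    EuclideanSpace ℝ (Fin n) := fun p => W j p.1 p.2

/-- `W(t,y) = ∑ t_j W_j(t,y)` as a function on the product space. -/
noncomputable def Wt : EuclideanSpace ℝ (Fin N) × EuclideanSpace ℝ (Fin n) →
    EuclideanSpace ℝ (Fin n) := fun p => ∑ j, (p.1 j) • W j p.1 p.2

variable {W}

lemma Wt_eq_sum : Wt W = ∑ j, (fun p => (p.1 j) • Wp W j p) := by
  funext p
  rw [Finset.sum_apply]
  rfl

lemma Wt_zero (y : EuclideanSpace ℝ (Fin n)) : Wt W (0, y) = 0 := by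
  show ∑ j, ((0 : EuclideanSpace ℝ (Fin N)) j) • W j 0 y = 0
  have : ∀ j : Fin N, (0 : EuclideanSpace ℝ (Fin N)) j = 0 := fun j => rfl
  simp [this]

variable (hW : ∀ j, ContDiff ℝ (⊤ : ℕ∞)
  (fun p : EuclideanSpace ℝ (Fin N) × EuclideanSpace ℝ (Fin n) => W j p.1 p.2))
include hW

lemma hWp (j : Fin N) : ContDiff ℝ (⊤ : ℕ∞) (Wp W j) := hW j

lemma hWt : ContDiff ℝ (⊤ : ℕ∞) (Wt W) := by
  rw [Wt_eq_sum]
  exact contDiff_finsetSum fun j _ => contDiff_coord_smul (hWp hW j) j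

lemma K1 (l : List (Fin N)) (k : Fin N) :
    (fun y => dirL (l.map (embN (EuclideanSpace ℝ (Fin n)))) (Wp W k) (0, y))
      = fun y => pdAlpha (fun i => l.count i) (fun t => W k t y) 0 := by
  funext y
  rw [pdAlpha_eq_dirL]
  have h1 : (fun t => W k t y) = fun t => Wp W k (t, y) := rfl
  rw [h1, dirL_fst_section (hWp hW k) _ y 0]
  rw [List.map_map]
  have h2 : ((fun v => ((v, 0) : EuclideanSpace ℝ (Fin N) × EuclideanSpace ℝ (Fin n))) ∘
      fun j => (EuclideanSpace.single j 1 : EuclideanSpace ℝ (Fin N)))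
      = embN (EuclideanSpace ℝ (Fin n)) := rfl
  rw [h2, dirL_perm (hWp hW k) ((mToList_count_perm l).map (embN _))]

lemma K2 (l : List (Fin N)) :
    (fun y => dirL (l.map (embN (EuclideanSpace ℝ (Fin n)))) (Wt W) (0, y))
      = fun y => pdAlpha (fun i => l.count i) (fun t => ∑ j, (t j) • W j t y) 0 := by
  funext y
  rw [pdAlpha_eq_dirL]
  have h1 : (fun t => ∑ j, (t j) • W j t y) = fun t => Wt W (t, y) := rfl
  rw [h1, dirL_fst_section (hWt hW) _ y 0]
  rw [List.map_map]
  have h2 : ((fun v => ((v, 0) : EuclideanSpace ℝ (Fin N) × EuclideanSpace ℝ (Fin n))) ∘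
      fun j => (EuclideanSpace.single j 1 : EuclideanSpace ℝ (Fin N)))
      = embN (EuclideanSpace ℝ (Fin n)) := rfl
  rw [h2, dirL_perm (hWt hW) ((mToList_count_perm l).map (embN _))]

lemma K4 (l : List (Fin N)) :
    (fun y => dirL (l.map (embN (EuclideanSpace ℝ (Fin n)))) (Wt W) (0, y))
      = ∑ j, ((l.count j : ℝ) •
          fun y => dirL ((l.erase j).map (embN (EuclideanSpace ℝ (Fin n))))
            (Wp W j) (0, y)) := by
  funext y
  rw [Finset.sum_apply]
  have h1 : dirL (l.map (embN (EuclideanSpace ℝ (Fin n)))) (Wt W)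
      = ∑ j, dirL (l.map (embN (EuclideanSpace ℝ (Fin n)))) (fun p => (p.1 j) • Wp W j p) := by
    rw [Wt_eq_sum]
    exact dirL_finsetSum (fun j _ => contDiff_coord_smul (hWp hW j) j) _
  rw [h1, Finset.sum_apply]
  apply Finset.sum_congr rfl
  intro j _
  rw [dirL_emb_coord_smul (hWp hW j) l j]
  simp only [Pi.add_apply, Pi.smul_apply]
  have h0 : ((0 : EuclideanSpace ℝ (Fin N)) j : ℝ) = 0 := rfl
  rw [h0, zero_smul, zero_add]

end Main

lemma lieBracket_sum_smul {N n : ℕ} (c : Fin N → ℝ)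
    (V : Fin N → EuclideanSpace ℝ (Fin n) → EuclideanSpace ℝ (Fin n))
    (hV : ∀ j, Differentiable ℝ (V j))
    (U : EuclideanSpace ℝ (Fin n) → EuclideanSpace ℝ (Fin n))
    (y : EuclideanSpace ℝ (Fin n)) :
    lieBracket (fun y' => ∑ j, c j • V j y') U y = ∑ j, c j • lieBracket (V j) U y := by
  show fderiv ℝ U y (∑ j, c j • V j y)
      - fderiv ℝ (fun y' => ∑ j, c j • V j y') y (U y) = _
  rw [fderiv_fun_sum (A := fun j y' => c j • V j y')
    (fun j _ => ((hV j) y).const_smul (c j))]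
  have h1 : ∀ j : Fin N, fderiv ℝ (fun y' => c j • V j y') y = c j • fderiv ℝ (V j) y :=
    fun j => fderiv_fun_const_smul ((hV j) y) (c j)
  simp only [h1, map_sum, map_smul, ContinuousLinearMap.sum_apply,
    ContinuousLinearMap.smul_apply, lieBracket, smul_sub, Finset.sum_sub_distrib]

section MainB

variable {N n : ℕ}
  {W : Fin N → EuclideanSpace ℝ (Fin N) → EuclideanSpace ℝ (Fin n) →
    EuclideanSpace ℝ (Fin n)}
  (hW : ∀ j, ContDiff ℝ (⊤ : ℕ∞)
    (fun p : EuclideanSpace ℝ (Fin N) × EuclideanSpace ℝ (Fin n) => W j p.1 p.2))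
include hW

lemma K5 {ρ : ℝ}
    (hInteg : ∀ (j k : Fin N) (t : EuclideanSpace ℝ (Fin N)), ‖t‖ < ρ → ∀ y,
      fderiv ℝ (fun s => W j s y) t (EuclideanSpace.single k 1)
        - fderiv ℝ (fun s => W k s y) t (EuclideanSpace.single j 1)
      = lieBracket (fun y' => W j t y') (fun y' => W k t y') y)
    (k : Fin N) :
    Set.EqOn (dirD (embN (EuclideanSpace ℝ (Fin n)) k) (Wt W))
      (Wp W k
        + (∑ j, fun p => (p.1 j) • dirD (embN (EuclideanSpace ℝ (Fin n)) j) (Wp W k) p)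
        + brk (Wt W) (Wp W k))
      {p | ‖p.1‖ < ρ} := by
  rintro ⟨t, y⟩ hp
  simp only [Set.mem_setOf_eq] at hp
  have hVd : ∀ j : Fin N, Differentiable ℝ (fun y' => W j t y') := fun j =>
    ((hW j).comp ((contDiff_const (c := t)).prodMk contDiff_id)).differentiable (by simp)
  -- left side
  have hL : dirD (embN (EuclideanSpace ℝ (Fin n)) k) (Wt W) (t, y)
      = ∑ j, (((EuclideanSpace.single k 1 : EuclideanSpace ℝ (Fin N)) j) • Wp W j (t, y)
          + (t j) • dirD (embN (EuclideanSpace ℝ (Fin n)) k) (Wp W j) (t, y)) := by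
    rw [Wt_eq_sum,
      dirD_finsetSum (fun j _ => contDiff_coord_smul (hWp hW j) j)
        (embN (EuclideanSpace ℝ (Fin n)) k),
      Finset.sum_apply]
    apply Finset.sum_congr rfl
    intro j _
    rw [dirD_coord_smul (hWp hW j) j (embN (EuclideanSpace ℝ (Fin n)) k)]
    rfl
  have hsingle : ∀ j : Fin N,
      ((EuclideanSpace.single k 1 : EuclideanSpace ℝ (Fin N)) j : ℝ)
        = if j = k then 1 else 0 := fun j => EuclideanSpace.single_apply k 1 j
  have hfirst : ∑ j, (((EuclideanSpace.single k 1 : EuclideanSpace ℝ (Fin N)) j)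
      • Wp W j (t, y)) = Wp W k (t, y) := by
    simp only [hsingle, ite_smul, one_smul, zero_smul]
    simp
  -- the mixed-derivative/integrability rewriting
  have hsec : ∀ j k' : Fin N, dirD (embN (EuclideanSpace ℝ (Fin n)) k') (Wp W j) (t, y)
      = fderiv ℝ (fun s => W j s y) t (EuclideanSpace.single k' 1) := by
    intro j k'
    have := dirD_fst_section (G := Wp W j) (t := t) (y := y)
      (((hW j).differentiable (by simp)) (t, y)) (EuclideanSpace.single k' 1)
    exact this.symm
  have hIk : ∀ j : Fin N,
      dirD (embN (EuclideanSpace ℝ (Fin n)) k) (Wp W j) (t, y)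
        = dirD (embN (EuclideanSpace ℝ (Fin n)) j) (Wp W k) (t, y)
          + lieBracket (fun y' => W j t y') (fun y' => W k t y') y := by
    intro j
    rw [hsec j k, hsec k j]
    exact sub_eq_iff_eq_add'.mp (hInteg j k t hp y)
  -- bracket term
  have hbrk : brk (Wt W) (Wp W k) (t, y)
      = ∑ j, (t j) • lieBracket (fun y' => W j t y') (fun y' => W k t y') y := by
    rw [brk_at (hWt hW) (hWp hW k) t y]
    have h1 : (fun y' => Wt W (t, y')) = fun y' => ∑ j, (t j) • W j t y' := rfl
    rw [h1]
    exact lieBracket_sum_smul (fun j => t j) (fun j => fun y' => W j t y') hVd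
      (fun y' => Wp W k (t, y')) y
  -- assemble
  show dirD (embN (EuclideanSpace ℝ (Fin n)) k) (Wt W) (t, y)
      = (Wp W k
        + (∑ j, fun p => (p.1 j) • dirD (embN (EuclideanSpace ℝ (Fin n)) j) (Wp W k) p)
        + brk (Wt W) (Wp W k)) (t, y)
  rw [hL]
  simp only [Pi.add_apply, Finset.sum_apply]
  have hsplit : ∑ j, (((EuclideanSpace.single k 1 : EuclideanSpace ℝ (Fin N)) j)
        • Wp W j (t, y)
      + (t j) • dirD (embN (EuclideanSpace ℝ (Fin n)) k) (Wp W j) (t, y))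
      = (∑ j, ((EuclideanSpace.single k 1 : EuclideanSpace ℝ (Fin N)) j) • Wp W j (t, y))
        + ∑ j, (t j) • dirD (embN (EuclideanSpace ℝ (Fin n)) k) (Wp W j) (t, y) :=
    Finset.sum_add_distrib
  rw [hsplit, hfirst, hbrk]
  have hsecond : ∑ j, (t j) • dirD (embN (EuclideanSpace ℝ (Fin n)) k) (Wp W j) (t, y)
      = (∑ j, (t j) • dirD (embN (EuclideanSpace ℝ (Fin n)) j) (Wp W k) (t, y))
        + ∑ j, (t j) • lieBracket (fun y' => W j t y') (fun y' => W k t y') y := by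
    rw [← Finset.sum_add_distrib]
    apply Finset.sum_congr rfl
    intro j _
    rw [hIk j, smul_add]
  rw [hsecond]
  abel

end MainB

section MainC

variable {N n : ℕ}
  {W : Fin N → EuclideanSpace ℝ (Fin N) → EuclideanSpace ℝ (Fin n) →
    EuclideanSpace ℝ (Fin n)}
  (hW : ∀ j, ContDiff ℝ (⊤ : ℕ∞)
    (fun p : EuclideanSpace ℝ (Fin N) × EuclideanSpace ℝ (Fin n) => W j p.1 p.2))
include hW

local notation "emb" => embN (EuclideanSpace ℝ (Fin n))

lemma K6 {ρ : ℝ} (hρ : 0 < ρ)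
    (hInteg : ∀ (j k : Fin N) (t : EuclideanSpace ℝ (Fin N)), ‖t‖ < ρ → ∀ y,
      fderiv ℝ (fun s => W j s y) t (EuclideanSpace.single k 1)
        - fderiv ℝ (fun s => W k s y) t (EuclideanSpace.single j 1)
      = lieBracket (fun y' => W j t y') (fun y' => W k t y') y)
    (l : List (Fin N)) (k : Fin N) :
    (fun y => dirL ((l ++ [k]).map emb) (Wt W) (0, y))
      = (fun y => dirL (l.map emb) (Wp W k) (0, y))
        + (l.length : ℝ) • (fun y => dirL (l.map emb) (Wp W k) (0, y))
        + ((splits l).map fun q => fun y =>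
            brk (dirL (q.1.map emb) (Wt W)) (dirL (q.2.map emb) (Wp W k)) (0, y)).sum := by
  have hU : IsOpen {p : EuclideanSpace ℝ (Fin N) × EuclideanSpace ℝ (Fin n) | ‖p.1‖ < ρ} :=
    isOpen_Iio.preimage (continuous_fst.norm)
  have hS : ContDiff ℝ (⊤ : ℕ∞)
      (∑ j, fun p : EuclideanSpace ℝ (Fin N) × EuclideanSpace ℝ (Fin n) =>
        (p.1 j) • dirD (emb j) (Wp W k) p) :=
    contDiff_finsetSum fun j _ => contDiff_coord_smul ((hWp hW k).dirD _) j
  have hB : ContDiff ℝ (⊤ : ℕ∞) (brk (Wt W) (Wp W k)) := ContDiff.brk (hWt hW) (hWp hW k)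
  funext y
  have h0 : ((0 : EuclideanSpace ℝ (Fin N)), y)
      ∈ {p : EuclideanSpace ℝ (Fin N) × EuclideanSpace ℝ (Fin n) | ‖p.1‖ < ρ} := by
    simp [hρ]
  have hmain := dirL_congr_on hU (K5 hW hInteg k) (l.map emb) h0
  -- left-hand side
  have hlhs : dirL (l.map emb) (dirD (emb k) (Wt W)) = dirL ((l ++ [k]).map emb) (Wt W) := by
    rw [List.map_append, dirL_append]
    rfl
  rw [hlhs] at hmain
  rw [hmain]
  -- expand the right-hand side
  have hA2 : ContDiff ℝ (⊤ : ℕ∞)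
      (Wp W k + ∑ j, fun p : EuclideanSpace ℝ (Fin N) × EuclideanSpace ℝ (Fin n) =>
        (p.1 j) • dirD (emb j) (Wp W k) p) := by
    exact (hWp hW k).add hS
  rw [dirL_add hA2 hB (l.map emb),
    dirL_add (hWp hW k) hS (l.map emb)]
  simp only [Pi.add_apply]
  congr 1
  · -- first two terms
    congr 1
    · -- the sum term
      rw [dirL_finsetSum (fun j _ => contDiff_coord_smul ((hWp hW k).dirD _) j) (l.map emb),
        Finset.sum_apply]
      have hterm : ∀ j : Fin N,
          dirL (l.map emb) (fun p => (p.1 j) • dirD (emb j) (Wp W k) p) (0, y)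
            = (l.count j : ℝ) • dirL (l.map emb) (Wp W k) (0, y) := by
        intro j
        rw [dirL_emb_coord_smul ((hWp hW k).dirD _) l j]
        simp only [Pi.add_apply, Pi.smul_apply]
        have h0' : ((0 : EuclideanSpace ℝ (Fin N)) j : ℝ) = 0 := rfl
        rw [h0', zero_smul, zero_add]
        have hcomp : dirL ((l.erase j).map emb) (dirD (emb j) (Wp W k))
            = dirL (((l.erase j) ++ [j]).map emb) (Wp W k) := by
          rw [List.map_append, dirL_append]
          rfl
        rw [hcomp]
        by_cases hmem : j ∈ l
        · have hperm : (((l.erase j) ++ [j]).map emb).Perm (l.map emb) := by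
            refine List.Perm.map emb ?_
            exact ((l.erase j).perm_append_singleton j).trans
              (List.perm_cons_erase hmem).symm
          rw [dirL_perm (hWp hW k) hperm]
        · rw [List.count_eq_zero_of_not_mem hmem]
          simp
      rw [Finset.sum_congr rfl fun j _ => hterm j, ← Finset.sum_smul,
        ← Nat.cast_sum, sum_count_eq_length]
      rfl
  · -- the bracket term
    rw [dirL_brk (hWt hW) (hWp hW k) emb l, list_sum_pointwise, list_sum_pointwise,
      List.map_map, List.map_map]
    rfl

end MainC

/-- with `W(t,y) = ∑_j t_j W_j(t,y)`, `X_{α,j} = ∂_t^α W_j(0,·)` and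
`X_α = ∂_t^α W(0,·)/α!`, one has
`Lie({X_{α,j} : |α| ≤ M}) = Lie({X_α : 1 ≤ |α| ≤ M+1})` for every `M`; consequently
`{X_{α,j}}` satisfies Hörmander's condition at `x₀` iff `{X_α : |α| ≥ 1}` does. -/
theorem stmt_7 (N n : ℕ) (hN : 1 ≤ N) (ρ : ℝ) (hρ : 0 < ρ)
    (W : Fin N → EuclideanSpace ℝ (Fin N) → EuclideanSpace ℝ (Fin n) →
      EuclideanSpace ℝ (Fin n))
    (hW : ∀ j, ContDiff ℝ (⊤ : ℕ∞)
      (fun p : EuclideanSpace ℝ (Fin N) × EuclideanSpace ℝ (Fin n) => W j p.1 p.2))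
    (hInteg : ∀ (j k : Fin N) (t : EuclideanSpace ℝ (Fin N)), ‖t‖ < ρ → ∀ y,
      fderiv ℝ (fun s => W j s y) t (EuclideanSpace.single k 1)
        - fderiv ℝ (fun s => W k s y) t (EuclideanSpace.single j 1)
      = lieBracket (fun y' => W j t y') (fun y' => W k t y') y)
    (XY : (Fin N → ℕ) → Fin N → EuclideanSpace ℝ (Fin n) → EuclideanSpace ℝ (Fin n))
    (hXY : ∀ α j y, XY α j y = pdAlpha α (fun t => W j t y) 0)
    (XZ : (Fin N → ℕ) → EuclideanSpace ℝ (Fin n) → EuclideanSpace ℝ (Fin n))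
    (hXZ : ∀ α y, XZ α y =
      (mfact α : ℝ)⁻¹ • pdAlpha α (fun t => ∑ j, (t j) • W j t y) 0) :
    (∀ M : ℕ,
      {f | LieGen {g | ∃ (α : Fin N → ℕ) (j : Fin N), (∑ i, α i) ≤ M ∧ g = XY α j} f}
        = {f | LieGen {g | ∃ α : Fin N → ℕ,
            1 ≤ ∑ i, α i ∧ (∑ i, α i) ≤ M + 1 ∧ g = XZ α} f}) ∧
    ∀ x₀ : EuclideanSpace ℝ (Fin n),
      (Submodule.span ℝ
          {v | ∃ f, LieGen {g | ∃ (α : Fin N → ℕ) (j : Fin N), g = XY α j} f ∧ v = f x₀}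
        = ⊤)
      ↔ (Submodule.span ℝ
          {v | ∃ f, LieGen {g | ∃ α : Fin N → ℕ, 1 ≤ ∑ i, α i ∧ g = XZ α} f ∧ v = f x₀}
        = ⊤) := by
  classical
  -- notation
  set emb := embN (EuclideanSpace ℝ (Fin n)) (N := N) with hembdef
  -- the two families in terms of iterated directional derivatives
  have hXYd : ∀ (l : List (Fin N)) (k : Fin N),
      (fun y => dirL (l.map emb) (Wp W k) (0, y)) = XY (fun i => l.count i) k := by
    intro l k
    rw [K1 hW l k]
    funext y
    rw [hXY]
  have hXZd : ∀ l : List (Fin N),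
      (fun y => dirL (l.map emb) (Wt W) (0, y))
        = (mfact (fun i => l.count i) : ℝ) • XZ (fun i => l.count i) := by
    intro l
    rw [K2 hW l]
    funext y
    rw [Pi.smul_apply, hXZ, smul_smul,
      mul_inv_cancel₀ (mfact_ne_zero (fun i => l.count i)), one_smul]
  -- the bounded sets
  set SY : ℕ → Set (EuclideanSpace ℝ (Fin n) → EuclideanSpace ℝ (Fin n)) :=
    fun M => {g | ∃ (α : Fin N → ℕ) (j : Fin N), (∑ i, α i) ≤ M ∧ g = XY α j} with hSYdef
  set SZ : ℕ → Set (EuclideanSpace ℝ (Fin n) → EuclideanSpace ℝ (Fin n)) :=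
    fun M => {g | ∃ α : Fin N → ℕ,
      1 ≤ ∑ i, α i ∧ (∑ i, α i) ≤ M + 1 ∧ g = XZ α} with hSZdef
  -- main induction: XY-type elements lie in the XZ-generated Lie algebra
  have main : ∀ (M : ℕ) (m : ℕ) (l : List (Fin N)), l.length ≤ m → l.length ≤ M →
      ∀ k, LieGen (SZ M) (fun y => dirL (l.map emb) (Wp W k) (0, y)) := by
    intro M m
    induction m using Nat.strong_induction_on with
    | _ m ih =>
      intro l hlm hlM k
      have hK6 := K6 hW hρ hInteg l k
      set tgt := fun y => dirL (l.map emb) (Wp W k) (0, y) with htgt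
      set Bsum := ((splits l).map fun q => fun y =>
          brk (dirL (q.1.map emb) (Wt W)) (dirL (q.2.map emb) (Wp W k)) (0, y)).sum
        with hBsum
      set Zf := fun y => dirL ((l ++ [k]).map emb) (Wt W) (0, y) with hZf
      have hsum : Zf - Bsum = ((1 : ℝ) + l.length) • tgt := by
        rw [hK6, add_smul, one_smul]
        abel
      -- membership of Zf
      have hZmem : LieGen (SZ M) Zf := by
        rw [hZf, hXZd (l ++ [k])]
        refine LieGen.smul _ (LieGen.of ?_)
        refine ⟨fun i => (l ++ [k]).count i, ?_, ?_, rfl⟩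
        · rw [sum_count_eq_length]
          simp
        · rw [sum_count_eq_length]
          simp only [List.length_append, List.length_cons, List.length_nil]
          omega
      -- membership of the bracket sum
      have hBmem : LieGen (SZ M) Bsum := by
        rw [hBsum]
        refine lieGen_listSum ?_
        intro f hf
        obtain ⟨q, hq, rfl⟩ := List.mem_map.mp hf
        have hlen := splits_length hq
        have hbrk : (fun y =>
            brk (dirL (q.1.map emb) (Wt W)) (dirL (q.2.map emb) (Wp W k)) (0, y))
            = lieBracket (fun y => dirL (q.1.map emb) (Wt W) (0, y))
                (fun y => dirL (q.2.map emb) (Wp W k) (0, y)) :=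
          funext fun y => brk_at ((hWt hW).dirL _) ((hWp hW k).dirL _) 0 y
        rw [hbrk]
        rcases q with ⟨q1, q2⟩
        cases q1 with
        | nil =>
          have hzero : (fun y => dirL (([] : List (Fin N)).map emb) (Wt W) (0, y))
              = (0 : EuclideanSpace ℝ (Fin n) → EuclideanSpace ℝ (Fin n)) := by
            funext y
            exact Wt_zero y
          rw [hzero, lieBracket_zero_left]
          exact LieGen.zero
        | cons a q1' =>
          have hlen' : q1'.length + 1 + q2.length = l.length := by
            simpa using hlen
          refine LieGen.bracket ?_ ?_
          · rw [hXZd (a :: q1')]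
            refine LieGen.smul _ (LieGen.of ?_)
            refine ⟨fun i => (a :: q1').count i, ?_, ?_, rfl⟩
            · rw [sum_count_eq_length]
              simp
            · rw [sum_count_eq_length]
              simp only [List.length_cons]
              omega
          · have h1 : q2.length < m := by omega
            exact ih q2.length h1 q2 le_rfl (by omega) k
      have := lieGen_sub hZmem hBmem
      rw [hsum] at this
      exact lieGen_of_smul (by positivity) this
  -- backward: XY generators are in the XZ Lie algebra
  have bwd : ∀ (M : ℕ) (α : Fin N → ℕ) (j : Fin N), (∑ i, α i) ≤ M →
      LieGen (SZ M) (XY α j) := by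
    intro M α j hle
    have hcnt : (fun i => (mToList α).count i) = α := funext fun i => count_mToList α i
    have := main M (mToList α).length (mToList α) le_rfl
      (by rw [length_mToList]; exact hle) j
    rwa [hXYd, hcnt] at this
  -- forward: XZ generators are in the XY Lie algebra
  have fwd : ∀ (M : ℕ) (α : Fin N → ℕ), 1 ≤ ∑ i, α i → (∑ i, α i) ≤ M + 1 →
      LieGen (SY M) (XZ α) := by
    intro M α h1 h2
    have hcnt : (fun i => (mToList α).count i) = α := funext fun i => count_mToList α i
    have hXZα := hXZd (mToList α)
    rw [hcnt] at hXZα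
    refine lieGen_of_smul (mfact_ne_zero α) ?_
    rw [← hXZα, K4 hW (mToList α)]
    refine lieGen_finsetSum ?_
    intro j _
    by_cases hj : j ∈ mToList α
    · refine LieGen.smul _ ?_
      rw [hXYd]
      refine LieGen.of ⟨fun i => ((mToList α).erase j).count i, j, ?_, rfl⟩
      rw [sum_count_eq_length, List.length_erase_of_mem hj, length_mToList]
      omega
    · rw [List.count_eq_zero_of_not_mem hj]
      rw [Nat.cast_zero, zero_smul]
      exact LieGen.zero
  -- part 1
  have part1 : ∀ M : ℕ, {f | LieGen (SY M) f} = {f | LieGen (SZ M) f} := by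
    intro M
    ext f
    constructor
    · intro h
      refine lieGen_trans ?_ h
      rintro g ⟨α, j, hle, rfl⟩
      exact bwd M α j hle
    · intro h
      refine lieGen_trans ?_ h
      rintro g ⟨α, h1, h2, rfl⟩
      exact fwd M α h1 h2
  refine ⟨part1, ?_⟩
  -- part 2
  have setEq : {f | LieGen {g | ∃ (α : Fin N → ℕ) (j : Fin N), g = XY α j} f}
      = {f | LieGen {g | ∃ α : Fin N → ℕ, 1 ≤ ∑ i, α i ∧ g = XZ α} f} := by
    ext f
    constructor
    · intro h
      refine lieGen_trans ?_ h
      rintro g ⟨α, j, rfl⟩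
      have h1 : LieGen (SZ (∑ i, α i)) (XY α j) := bwd _ α j le_rfl
      refine lieGen_mono ?_ h1
      rintro g' ⟨β, hb1, _, rfl⟩
      exact ⟨β, hb1, rfl⟩
    · intro h
      refine lieGen_trans ?_ h
      rintro g ⟨α, h1, rfl⟩
      have h2 : LieGen (SY (∑ i, α i)) (XZ α) := fwd _ α h1 (by omega)
      refine lieGen_mono ?_ h2
      rintro g' ⟨β, j, _, rfl⟩
      exact ⟨β, j, rfl⟩
  intro x₀
  have hv : {v | ∃ f, LieGen {g | ∃ (α : Fin N → ℕ) (j : Fin N), g = XY α j} f ∧ v = f x₀}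
      = {v | ∃ f, LieGen {g | ∃ α : Fin N → ℕ, 1 ≤ ∑ i, α i ∧ g = XZ α} f ∧ v = f x₀} := by
    ext v
    constructor
    · rintro ⟨f, hf, rfl⟩
      exact ⟨f, (Set.ext_iff.mp setEq f).mp hf, rfl⟩
    · rintro ⟨f, hf, rfl⟩
      exact ⟨f, (Set.ext_iff.mp setEq f).mpr hf, rfl⟩
  rw [hv]
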